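/- Let Q be a complex symmetric 2n×2n matrix with Re Q positive semidefinite. For all t ∈ ℝ, every eigenvalue of the matrix K_t = e^{-2itJQ} e^{-2itJ\bar{Q}} is a positive real number. -/

import Mathlib

/-!
Put `H = -iJ` and `B = -2iJQ̄`. Then `H` is Hermitian with `H² = 1`, `-2iJQ = H Bᴴ H` and
`Bᴴ H + H B = 4 Re Q ≥ 0`, so `K_t = H P_t` with `P_t = exp(tB)ᴴ H exp(tB)`. The derivative
`exp(tB)ᴴ (Bᴴ H + H B) exp(tB)` of `P_t` is positive semidefinite, so `Γ_t = P_t - P_0` is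
semidefinite with the sign of `t`, and `K_t = 1 + H Γ_t`. A Hermitian matrix times a semidefinite
one has real spectrum, so the spectrum of `K_t` is real; it misses `0` because `K_t` is
invertible, and it is `{1}` at `t = 0`. By continuity in `t` it stays in `(0, ∞)`.
-/

open Matrix NormedSpace
open scoped ComplexOrder

section Spectrum

variable {𝕜 A : Type*} [NontriviallyNormedField 𝕜] [NormedRing A] [NormedAlgebra 𝕜 A]
  [CompleteSpace A]

theorem isClosed_setOf_mem_spectrum : IsClosed {p : 𝕜 × A | p.1 ∈ spectrum 𝕜 p.2} :=
  (Units.isOpen.preimage (by fun_prop : Continuous fun p : 𝕜 × A =>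
    algebraMap 𝕜 A p.1 - p.2)).isClosed_compl

theorem isClosed_setOf_exists_mem_spectrum [ProperSpace 𝕜] {X : Type*} [TopologicalSpace X]
    [SequentialSpace X] {a : X → A} (ha : Continuous a) {C : Set 𝕜} (hC : IsClosed C) :
    IsClosed {x | ∃ μ ∈ spectrum 𝕜 (a x), μ ∈ C} := by
  refine IsSeqClosed.isClosed fun {x} x₀ hx hlim => ?_
  choose μ hμσ hμC using hx
  obtain ⟨R, hR⟩ :=
    (Metric.isBounded_range_of_tendsto _ ((ha.tendsto x₀).comp hlim)).exists_norm_le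
  have hμR : ∀ k, μ k ∈ Metric.closedBall (0 : 𝕜) (R * ‖(1 : A)‖) := fun k =>
    Metric.closedBall_subset_closedBall (by gcongr; exact hR _ ⟨k, rfl⟩)
      (spectrum.subset_closedBall_norm_mul _ (hμσ k))
  obtain ⟨μ₀, -, φ, hφ, hμφ⟩ := tendsto_subseq_of_bounded Metric.isBounded_closedBall hμR
  refine ⟨μ₀, ?_, hC.mem_of_tendsto hμφ (.of_forall fun k => hμC _)⟩
  have hgraph : Filter.Tendsto (fun k => (μ (φ k), a (x (φ k)))) Filter.atTop (nhds (μ₀, a x₀)) :=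
    hμφ.prodMk_nhds ((ha.tendsto x₀).comp (hlim.comp hφ.tendsto_atTop))
  exact isClosed_setOf_mem_spectrum.mem_of_tendsto hgraph (.of_forall fun k => hμσ _)

end Spectrum

namespace Matrix

variable {n : Type*} [Fintype n]

open scoped Matrix.Norms.Operator MatrixOrder in
theorem monotone_of_hasDerivAt_posSemidef {f f' : ℝ → Matrix n n ℂ}
    (hf : ∀ t, (f t).IsHermitian) (hff' : ∀ t, HasDerivAt f (f' t) t)
    (hf' : ∀ t, (f' t).PosSemidef) : Monotone f := by
  intro s t hst
  refine .of_dotProduct_mulVec_nonneg ((hf t).sub (hf s)) fun x => ?_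
  let q : Matrix n n ℂ →L[ℝ] ℝ := LinearMap.toContinuousLinearMap
    { toFun M := (star x ⬝ᵥ (M *ᵥ x)).re
      map_add' M N := by simp [add_mulVec]
      map_smul' c M := by simp [smul_mulVec] }
  have hq : Monotone fun u => q (f u) :=
    monotone_of_hasDerivAt_nonneg (fun u => q.hasFDerivAt.comp_hasDerivAt u (hff' u))
      fun u => (Complex.le_def.1 ((hf' u).dotProduct_mulVec_nonneg x)).1
  rw [Complex.le_def]
  refine ⟨?_, (((hf t).sub (hf s)).im_star_dotProduct_mulVec_self x).symm⟩
  rw [sub_mulVec, dotProduct_sub, Complex.zero_re, Complex.sub_re, sub_nonneg]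
  exact hq hst

variable [DecidableEq n]

theorem exists_mulVec_eq_smul_of_mem_spectrum {𝕜 : Type*} [Field 𝕜] {M : Matrix n n 𝕜} {μ : 𝕜}
    (hμ : μ ∈ spectrum 𝕜 M) : ∃ v ≠ 0, M *ᵥ v = μ • v := by
  rw [← spectrum_toLin', ← Module.End.hasEigenvalue_iff_mem_spectrum] at hμ
  obtain ⟨v, hv⟩ := hμ.exists_hasEigenvector
  exact ⟨v, hv.2, by rw [← toLin'_apply, hv.apply_eq_smul]⟩

/-- Pairing `H Γ v = μ v` with `Γ v` gives `μ ⟪v, Γ v⟫ = ⟪Γ v, H Γ v⟫ ∈ ℝ`, with `⟪v, Γ v⟫ ≥ 0`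
vanishing only if `Γ v = 0`. -/
theorem IsHermitian.im_eq_zero_of_mem_spectrum_mul {H Γ : Matrix n n ℂ} (hH : H.IsHermitian)
    (hΓ : Γ.PosSemidef) {μ : ℂ} (hμ : μ ∈ spectrum ℂ (H * Γ)) : μ.im = 0 := by
  obtain ⟨v, hv, hHΓv⟩ := exists_mulVec_eq_smul_of_mem_spectrum hμ
  rw [← mulVec_mulVec] at hHΓv
  set q := star v ⬝ᵥ (Γ *ᵥ v)
  have hq : μ * q = star (Γ *ᵥ v) ⬝ᵥ (H *ᵥ (Γ *ᵥ v)) := by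
    rw [hHΓv, dotProduct_smul, star_mulVec, ← dotProduct_mulVec, hΓ.isHermitian.eq, smul_eq_mul]
  have hqim : q.im = 0 := hΓ.isHermitian.im_star_dotProduct_mulVec_self v
  by_cases hq0 : q = 0
  · rw [hΓ.dotProduct_mulVec_zero_iff] at hq0
    rw [hq0, mulVec_zero, eq_comm, smul_eq_zero] at hHΓv
    simp [hHΓv.resolve_right hv]
  · have hqre : q.re ≠ 0 := fun h => hq0 (Complex.ext h hqim)
    have hreal : (μ * q).im = 0 := hq ▸ hH.im_star_dotProduct_mulVec_self _
    rw [Complex.mul_im, hqim, mul_zero, zero_add] at hreal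
    exact (mul_eq_zero.1 hreal).resolve_right hqre

theorem mem_spectrum_iff_det_eq_zero {M : Matrix n n ℂ} {μ : ℂ} :
    μ ∈ spectrum ℂ M ↔ (algebraMap ℂ (Matrix n n ℂ) μ - M).det = 0 := by
  rw [spectrum.mem_iff, isUnit_iff_isUnit_det, isUnit_iff_ne_zero, not_not]

theorem pow_card_le_norm_det_sub {M : Matrix n n ℂ} {μ : ℂ} {d : ℝ} (hd₀ : 0 ≤ d)
    (hd : ∀ ν ∈ spectrum ℂ M, d ≤ ‖μ - ν‖) :
    d ^ Fintype.card n ≤ ‖(algebraMap ℂ (Matrix n n ℂ) μ - M).det‖ := by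
  have hroots : ∀ ν ∈ M.charpoly.roots, ν ∈ spectrum ℂ M := fun ν hν =>
    mem_spectrum_iff_isRoot_charpoly.2 (Polynomial.isRoot_of_mem_roots hν)
  rw [← charpoly_natDegree_eq_dim M, (IsAlgClosed.splits M.charpoly).natDegree_eq_card_roots,
    show algebraMap ℂ (Matrix n n ℂ) μ = scalar n μ from rfl, ← eval_charpoly,
    (IsAlgClosed.splits _).eval_eq_prod_roots_of_monic M.charpoly_monic]
  calc d ^ M.charpoly.roots.card = (M.charpoly.roots.map fun _ => d).prod := by simp
    _ ≤ (M.charpoly.roots.map fun ν => ‖μ - ν‖).prod :=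
      Multiset.prod_map_le_prod_map₀ _ _ (fun _ _ => hd₀) fun ν hν => hd ν (hroots ν hν)
    _ = _ := by
      simpa [Multiset.map_map] using
        (map_multiset_prod (normHom : ℂ →*₀ ℝ) (M.charpoly.roots.map (μ - ·))).symm

section

open scoped Matrix.Norms.Operator MatrixOrder

/-- The parameters with spectrum in `re > 0` form an open set by upper semicontinuity of the
spectrum, and a closed one because `|det (μ - K x)| ≥ |μ| ^ card n` for real `μ ≤ 0` whenever the
spectrum of `K x` lies in `re > 0`. -/
theorem spectrum_re_pos_of_continuous {X : Type*} [TopologicalSpace X] [SequentialSpace X]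
    [PreconnectedSpace X] {K : X → Matrix n n ℂ} (hK : Continuous K)
    (hreal : ∀ x, ∀ μ ∈ spectrum ℂ (K x), μ.im = 0) (hunit : ∀ x, IsUnit (K x)) {x₀ : X}
    (hx₀ : ∀ μ ∈ spectrum ℂ (K x₀), 0 < μ.re) (x : X) : ∀ μ ∈ spectrum ℂ (K x), 0 < μ.re := by
  set U := {x | ∀ μ ∈ spectrum ℂ (K x), 0 < μ.re}
  have hopen : IsOpen U := by
    have := isClosed_setOf_exists_mem_spectrum hK (C := {μ : ℂ | μ.re ≤ 0})
      (isClosed_le Complex.continuous_re continuous_const)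
    convert this.isOpen_compl using 1
    ext y
    simp [U]
  have hclosed : IsClosed U := by
    refine isClosed_of_closure_subset fun x hx μ hμ => ?_
    by_contra! hre
    have hμ₀ : μ ≠ 0 := by
      rintro rfl
      exact (spectrum.zero_notMem_iff ℂ).2 (hunit x) hμ
    have hnorm : ‖μ‖ = -μ.re := by
      rw [← Complex.abs_re_eq_norm.2 (hreal x μ hμ), abs_of_nonpos hre]
    have hU : U ⊆ {y | ‖μ‖ ^ Fintype.card n ≤ ‖(algebraMap ℂ _ μ - K y).det‖} :=
      fun y hy => pow_card_le_norm_det_sub (norm_nonneg μ) fun ν hν =>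
        calc ‖μ‖ ≤ (ν - μ).re := by rw [hnorm, Complex.sub_re]; linarith [hy ν hν]
          _ ≤ ‖μ - ν‖ := by rw [← norm_neg, neg_sub]; exact Complex.re_le_norm _
    have hx := (isClosed_le continuous_const (by fun_prop)).closure_subset_iff.2 hU hx
    rw [Set.mem_ofPred_eq, mem_spectrum_iff_det_eq_zero.1 hμ, norm_zero] at hx
    exact (pow_pos (norm_pos_iff.2 hμ₀) _).not_ge hx
  exact Set.eq_univ_iff_forall.1 (IsClopen.eq_univ ⟨hclosed, hopen⟩ ⟨x₀, hx₀⟩) x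

theorem conjTranspose_exp_real_smul (B : Matrix n n ℂ) (t : ℝ) :
    (exp (t • B))ᴴ = exp (t • Bᴴ) := by
  rw [← exp_conjTranspose, conjTranspose_smul, star_trivial]

theorem hasDerivAt_conjTranspose_exp_mul_mul_exp (H B : Matrix n n ℂ) (t : ℝ) :
    HasDerivAt (fun s : ℝ => (exp (s • B))ᴴ * H * exp (s • B))
      ((exp (t • B))ᴴ * (Bᴴ * H + H * B) * exp (t • B)) t := by
  simp only [conjTranspose_exp_real_smul]
  refine (((hasDerivAt_exp_smul_const (𝕂 := ℝ) Bᴴ t).mul_const H).mul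
    (hasDerivAt_exp_smul_const' (𝕂 := ℝ) B t)).congr_deriv ?_
  noncomm_ring

variable {H B : Matrix n n ℂ}

theorem monotone_conjTranspose_exp_mul_mul_exp (hH : H.IsHermitian)
    (hB : (Bᴴ * H + H * B).PosSemidef) :
    Monotone fun t : ℝ => (exp (t • B))ᴴ * H * exp (t • B) :=
  monotone_of_hasDerivAt_posSemidef (fun _ => isHermitian_conjTranspose_mul_mul _ hH)
    (hasDerivAt_conjTranspose_exp_mul_mul_exp H B) fun _ => hB.conjTranspose_mul_mul_same _

theorem exp_conj_mul_exp (hHH : H * H = 1) (B : Matrix n n ℂ) (t : ℝ) :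
    exp (t • (H * Bᴴ * H)) * exp (t • B) = H * ((exp (t • B))ᴴ * H * exp (t • B)) := by
  have := exp_units_conj ⟨H, H, hHH, hHH⟩ (t • Bᴴ)
  simp only [Units.val_mk, Units.inv_mk, mul_smul_comm, smul_mul_assoc] at this
  rw [this, conjTranspose_exp_real_smul, mul_assoc, mul_assoc, mul_assoc]

theorem im_eq_zero_and_re_pos_of_mem_spectrum_exp_mul_exp (hH : H.IsHermitian)
    (hHH : H * H = 1) (hB : (Bᴴ * H + H * B).PosSemidef) (t : ℝ) :
    ∀ μ ∈ spectrum ℂ (exp (t • (H * Bᴴ * H)) * exp (t • B)), μ.im = 0 ∧ 0 < μ.re := by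
  set P := fun s : ℝ => (exp (s • B))ᴴ * H * exp (s • B)
  have hP0 : P 0 = H := by simp [P]
  have hmono := monotone_conjTranspose_exp_mul_mul_exp hH hB
  have hreal (s : ℝ) : ∀ μ ∈ spectrum ℂ (H * P s), μ.im = 0 := by
    intro μ hμ
    have hK1 : H * P s = algebraMap ℂ _ 1 + H * (P s - P 0) := by
      rw [mul_sub, hP0, hHH, map_one]
      abel
    rw [hK1, ← sub_add_cancel μ 1, spectrum.add_mem_add_iff] at hμ
    rcases le_total 0 s with hs | hs
    · simpa using hH.im_eq_zero_of_mem_spectrum_mul (hmono hs) hμ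
    · rw [← neg_mul_neg, neg_sub] at hμ
      simpa using hH.neg.im_eq_zero_of_mem_spectrum_mul (hmono hs) hμ
  have hK (s : ℝ) := exp_conj_mul_exp hHH B s
  have hcont : Continuous fun s => H * P s := continuous_const.mul <| continuous_iff_continuousAt.2
    fun s => (hasDerivAt_conjTranspose_exp_mul_mul_exp H B s).continuousAt
  have hunit (s : ℝ) : IsUnit (H * P s) := hK s ▸ (isUnit_exp _).mul (isUnit_exp _)
  have h₀ : ∀ μ ∈ spectrum ℂ (H * P 0), 0 < μ.re := by
    rw [hP0, hHH]
    nontriviality Matrix n n ℂ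
    simp
  rw [hK]
  exact fun μ hμ => ⟨hreal t μ hμ, spectrum_re_pos_of_continuous hcont hreal hunit h₀ t μ hμ⟩

end

end Matrix

theorem fromBlocks_zero_one_neg_one_zero_mul_self {m R : Type*} [Fintype m] [DecidableEq m]
    [Ring R] : (fromBlocks 0 1 (-1) 0 : Matrix (m ⊕ m) (m ⊕ m) R) * fromBlocks 0 1 (-1) 0 = -1 := by
  rw [fromBlocks_multiply]
  simp [← fromBlocks_one, fromBlocks_neg]

theorem conjTranspose_fromBlocks_zero_one_neg_one_zero {m R : Type*} [DecidableEq m] [Ring R]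
    [StarRing R] : (fromBlocks 0 1 (-1) 0 : Matrix (m ⊕ m) (m ⊕ m) R)ᴴ = -fromBlocks 0 1 (-1) 0 := by
  simp [fromBlocks_conjTranspose, fromBlocks_neg]

theorem conjTranspose_map_conj_of_transpose_eq {m : Type*} {Q : Matrix m m ℂ} (hQ : Qᵀ = Q) :
    (Q.map (starRingEnd ℂ))ᴴ = Q := by
  ext i j
  simpa using congrFun (congrFun hQ i) j

theorem eigenvalues_Kt_positive_real (n : ℕ) (t : ℝ)
    (J Q : Matrix (Fin n ⊕ Fin n) (Fin n ⊕ Fin n) ℂ)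
    (hJ : J = Matrix.fromBlocks 0 1 (-1) 0)
    (hQ : Qᵀ = Q)
    (hpos : ((2:ℂ)⁻¹ • (Q + Q.map (starRingEnd ℂ))).PosSemidef) :
    ∀ μ ∈ spectrum ℂ
        (NormedSpace.exp ((-2 * Complex.I * (t:ℂ)) • (J * Q)) *
          NormedSpace.exp ((-2 * Complex.I * (t:ℂ)) • (J * Q.map (starRingEnd ℂ)))),
      μ.im = 0 ∧ 0 < μ.re := by
  have hJJ : J * J = -1 := hJ ▸ fromBlocks_zero_one_neg_one_zero_mul_self
  have hJH : Jᴴ = -J := hJ ▸ conjTranspose_fromBlocks_zero_one_neg_one_zero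
  have hQH := conjTranspose_map_conj_of_transpose_eq hQ
  set H := (-Complex.I) • J
  set B := (-2 * Complex.I) • (J * Q.map (starRingEnd ℂ))
  have hH : H.IsHermitian := by simp [H, IsHermitian, conjTranspose_smul, hJH]
  have hHH : H * H = 1 := by simp [H, smul_smul, hJJ]
  have hB : Bᴴ * H + H * B = (4 : ℂ) • ((2:ℂ)⁻¹ • (Q + Q.map (starRingEnd ℂ))) := by
    norm_num [H, B, conjTranspose_smul, hJH, hQH, smul_smul, mul_assoc, hJJ, ← mul_assoc J J,
      smul_add, mul_left_comm _ (2:ℂ)]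
  have hA : H * Bᴴ * H = (-2 * Complex.I) • (J * Q) := by
    simp [H, B, conjTranspose_smul, hJH, hQH, smul_smul, mul_assoc, hJJ, mul_comm Complex.I]
  have hexp (M : Matrix (Fin n ⊕ Fin n) (Fin n ⊕ Fin n) ℂ) :
      (-2 * Complex.I * (t:ℂ)) • M = t • ((-2 * Complex.I) • M) := by
    rw [← smul_assoc, Complex.real_smul, mul_comm (t : ℂ)]
  rw [hexp, hexp, ← hA]
  exact im_eq_zero_and_re_pos_of_mem_spectrum_exp_mul_exp hH hHH
    (hB ▸ hpos.smul (by norm_num)) t
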